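/- For every finite simple graph G, |λ(G) − λ(Ḡ)| ≤ 1, where λ denotes the location-domination number and Ḡ the complement graph. -/

import Mathlib

open SimpleGraph

/-- `S` is a dominating set of `G`: every vertex outside `S` has a neighbor in `S`. -/
def isDomSet {α : Type*} (G : SimpleGraph α) (S : Set α) : Prop :=
  ∀ v ∉ S, ∃ u ∈ S, G.Adj v u

/-- `S` is a locating-dominating set (LD-set) of `G`. -/
def isLDSet {α : Type*} (G : SimpleGraph α) (S : Set α) : Prop :=
  isDomSet G S ∧ ∀ u ∉ S, ∀ v ∉ S, u ≠ v →
    G.neighborSet u ∩ S ≠ G.neighborSet v ∩ S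

/-- The location-domination number `λ(G)`. -/
noncomputable def ldNum {α : Type*} (G : SimpleGraph α) : ℕ :=
  sInf {n | ∃ S : Set α, isLDSet G S ∧ S.ncard = n}

/-- The global location-domination number `λ_g(G)`. -/
noncomputable def gldNum {α : Type*} (G : SimpleGraph α) : ℕ :=
  sInf {n | ∃ S : Set α, isLDSet G S ∧ isLDSet Gᶜ S ∧ S.ncard = n}

/-- `G` is bipartite with stable sets `U` and `W`. -/
def bipartiteWith {α : Type*} (G : SimpleGraph α) (U W : Set α) : Prop :=
  U ∪ W = Set.univ ∧ Disjoint U W ∧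
    ∀ ⦃u v : α⦄, G.Adj u v → (u ∈ U ∧ v ∈ W) ∨ (u ∈ W ∧ v ∈ U)

/-!
A vertex outside `S` is adjacent in `Gᶜ` exactly to the vertices of `S` it misses in `G`, so the
traces `N(u) ∩ S` in `Gᶜ` are the complements in `S` of those in `G`: an LD-set of `G` still
separates the vertices outside it in `Gᶜ`. It can only fail to dominate in `Gᶜ`, at a vertex
adjacent in `G` to all of `S`, and by the locating property there is at most one such vertex;
adding it to `S` gives an LD-set of `Gᶜ`. Hence `λ(Gᶜ) ≤ λ(G) + 1`, and by symmetry the claim.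
-/

section

variable {V : Type*} {G : SimpleGraph V} {S T : Set V}

lemma isLDSet_univ (G : SimpleGraph V) : isLDSet G Set.univ :=
  ⟨fun v hv => absurd (Set.mem_univ v) hv, fun u hu => absurd (Set.mem_univ u) hu⟩

lemma isLDSet.mono (hS : isLDSet G S) (hST : S ⊆ T) : isLDSet G T := by
  refine ⟨fun v hv => ?_, fun u hu v hv huv h => ?_⟩
  · obtain ⟨x, hx, hvx⟩ := hS.1 v (fun h => hv (hST h))
    exact ⟨x, hST hx, hvx⟩
  · refine hS.2 u (fun h => hu (hST h)) v (fun h => hv (hST h)) huv ?_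
    rw [← Set.inter_eq_right.mpr hST, ← Set.inter_assoc, h, Set.inter_assoc]

lemma compl_neighborSet_inter_of_notMem {u : V} (hu : u ∉ S) :
    Gᶜ.neighborSet u ∩ S = S \ G.neighborSet u := by
  ext x
  simp only [Set.mem_inter_iff, mem_neighborSet, compl_adj, Set.mem_sdiff]
  exact ⟨fun ⟨⟨_, hux⟩, hx⟩ => ⟨hx, hux⟩, fun ⟨hx, hux⟩ => ⟨⟨fun h => hu (h ▸ hx), hux⟩, hx⟩⟩

lemma compl_neighborSet_inter_eq_iff {u v : V} (hu : u ∉ S) (hv : v ∉ S) :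
    Gᶜ.neighborSet u ∩ S = Gᶜ.neighborSet v ∩ S ↔
      G.neighborSet u ∩ S = G.neighborSet v ∩ S := by
  rw [compl_neighborSet_inter_of_notMem hu, compl_neighborSet_inter_of_notMem hv,
    Set.ext_iff, Set.ext_iff]
  exact forall_congr' fun x => by simp only [Set.mem_sdiff, Set.mem_inter_iff]; tauto

lemma isLDSet.eq_of_subset_neighborSet (hS : isLDSet G S) {v w : V} (hv : v ∉ S) (hw : w ∉ S)
    (hSv : S ⊆ G.neighborSet v) (hSw : S ⊆ G.neighborSet w) : v = w := by
  by_contra hvw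
  exact hS.2 v hv w hw hvw (by rw [Set.inter_eq_right.mpr hSv, Set.inter_eq_right.mpr hSw])

lemma isLDSet.compl (hS : isLDSet G S) (h : ∀ v ∉ S, ¬S ⊆ G.neighborSet v) :
    isLDSet Gᶜ S := by
  refine ⟨fun v hv => ?_, fun u hu v hv huv => ?_⟩
  · obtain ⟨x, hx, hvx⟩ := Set.not_subset.mp (h v hv)
    exact ⟨x, hx, (compl_adj G v x).mpr ⟨fun e => hv (e ▸ hx), hvx⟩⟩
  · rw [Ne, compl_neighborSet_inter_eq_iff hu hv]
    exact hS.2 u hu v hv huv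

lemma isLDSet.exists_compl_ncard_le (hS : isLDSet G S) :
    ∃ T, isLDSet Gᶜ T ∧ T.ncard ≤ S.ncard + 1 := by
  by_cases h : ∃ w ∉ S, S ⊆ G.neighborSet w
  · obtain ⟨w, hw, hSw⟩ := h
    refine ⟨insert w S, (hS.mono (Set.subset_insert w S)).compl fun v hv hv' => ?_,
      Set.ncard_insert_le w S⟩
    have hvS : v ∉ S := fun h => hv (Set.mem_insert_of_mem w h)
    have hvw : v = w := hS.eq_of_subset_neighborSet hvS hw ((Set.subset_insert w S).trans hv') hSw
    exact hv (hvw ▸ Set.mem_insert w S)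
  · push Not at h
    exact ⟨S, hS.compl h, Nat.le_succ _⟩

lemma ldNum_le_ncard (hS : isLDSet G S) : ldNum G ≤ S.ncard :=
  Nat.sInf_le ⟨S, hS, rfl⟩

lemma exists_isLDSet_ncard_eq_ldNum (G : SimpleGraph V) :
    ∃ S, isLDSet G S ∧ S.ncard = ldNum G :=
  Nat.sInf_mem (s := {n | ∃ S, isLDSet G S ∧ S.ncard = n}) ⟨_, Set.univ, isLDSet_univ G, rfl⟩

lemma ldNum_compl_le (G : SimpleGraph V) : ldNum Gᶜ ≤ ldNum G + 1 := by
  obtain ⟨S, hS, hcard⟩ := exists_isLDSet_ncard_eq_ldNum G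
  obtain ⟨T, hT, hTS⟩ := hS.exists_compl_ncard_le
  exact hcard ▸ (ldNum_le_ncard hT).trans hTS

end

theorem stmt3_general {V : Type*} (G : SimpleGraph V) :
    |(ldNum G : ℤ) - (ldNum Gᶜ : ℤ)| ≤ 1 := by
  have h₁ := ldNum_compl_le G
  have h₂ := compl_compl G ▸ ldNum_compl_le Gᶜ
  rw [abs_sub_le_iff]
  omega

theorem stmt3 {V : Type*} [Fintype V] (G : SimpleGraph V) :
    |(ldNum G : ℤ) - (ldNum Gᶜ : ℤ)| ≤ 1 :=
  stmt3_general G
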